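/- Suppose f : ℝ → ℝ is continuous, F is its primitive with F(0)=0, 0 < θ F(t) ≤ t f(t) for all t ≠ 0 with θ > 3 - μ where 0 < μ < 1, and the function t ↦ (f(t)t - (2-μ)F(t))/|t|^{3-μ} is non-increasing on (-∞,0) and non-decreasing on (0,∞). Then for each fixed t ≠ 0 the function β ↦ F(βt)/β^{3-μ} is strictly increasing on (0, ∞). -/

import Mathlib

/-!
Differentiating, `d/dβ [F(βt) β^{-(3-μ)}] = β^{-(4-μ)} (βt f(βt) - (3-μ) F(βt))`, and the
Ambrosetti–Rabinowitz condition gives `(3-μ) F(s) < θ F(s) ≤ s f(s)` for `s ≠ 0`, since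
`θ > 3 - μ > 0` forces `F(s) > 0`.
-/

open Real intervalIntegral Set

theorem strictMonoOn_div_rpow_of_mul_lt_mul_deriv {G g : ℝ → ℝ} {p : ℝ}
    (hG : ∀ x > 0, HasDerivAt G (g x) x) (hlt : ∀ x > 0, p * G x < x * g x) :
    StrictMonoOn (fun x => G x / x ^ p) (Ioi 0) := by
  have hderiv : ∀ x ∈ Ioi (0 : ℝ), HasDerivAt (fun x => G x * x ^ (-p))
      (x ^ (-p - 1) * (x * g x - p * G x)) x := by
    intro x (hx : 0 < x)
    refine ((hG x hx).mul (hasDerivAt_rpow_const (p := -p) (Or.inl hx.ne'))).congr_deriv ?_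
    have hsplit : x ^ (-p) = x * x ^ (-p - 1) := by
      conv_lhs => rw [show -p = 1 + (-p - 1) by ring, rpow_add hx, rpow_one]
    rw [hsplit]; ring
  have hmono : StrictMonoOn (fun x => G x * x ^ (-p)) (Ioi 0) :=
    strictMonoOn_of_hasDerivWithinAt_pos (convex_Ioi 0)
      (fun x hx => (hderiv x hx).continuousAt.continuousWithinAt)
      (fun x hx => (hderiv x (interior_subset hx)).hasDerivWithinAt)
      (fun x hx => by
        rw [interior_Ioi] at hx
        exact mul_pos (rpow_pos_of_pos hx _) (sub_pos.2 (hlt x hx)))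
  refine hmono.congr fun x (hx : 0 < x) => ?_
  simp only [rpow_neg hx.le, div_eq_mul_inv]

theorem stmt2_general (f F : ℝ → ℝ) (hf : Continuous f)
    (hF : ∀ t, F t = ∫ s in (0:ℝ)..t, f s)
    (μ θ : ℝ) (hμ1 : μ < 1) (hθ : θ > 3 - μ)
    (hAR : ∀ t : ℝ, t ≠ 0 → 0 < θ * F t ∧ θ * F t ≤ t * f t) :
    ∀ t : ℝ, t ≠ 0 → StrictMonoOn (fun β => F (β * t) / β ^ (3 - μ)) (Set.Ioi (0:ℝ)) := by
  intro t ht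
  have hFderiv : ∀ x, HasDerivAt F (f x) x := by
    rw [funext hF]
    exact fun x => (hf.integral_hasStrictDerivAt 0 x).hasDerivAt
  have hθ0 : 0 < θ := by linarith
  refine strictMonoOn_div_rpow_of_mul_lt_mul_deriv (g := fun β => f (β * t) * t)
    (fun β _ => (hFderiv (β * t)).comp β (hasDerivAt_mul_const t))
    (fun β hβ => ?_)
  obtain ⟨hθF_pos, hθF_le⟩ := hAR (β * t) (mul_ne_zero hβ.ne' ht)
  have hF_pos : 0 < F (β * t) := pos_of_mul_pos_right hθF_pos hθ0.le
  calc (3 - μ) * F (β * t) < θ * F (β * t) := mul_lt_mul_of_pos_right hθ hF_pos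
    _ ≤ β * (f (β * t) * t) := by linarith

theorem stmt2 (f F : ℝ → ℝ) (hf : Continuous f) (hF0 : F 0 = 0)
    (hF : ∀ t, F t = ∫ s in (0:ℝ)..t, f s)
    (μ θ : ℝ) (hμ : 0 < μ) (hμ1 : μ < 1) (hθ : θ > 3 - μ)
    (hAR : ∀ t : ℝ, t ≠ 0 → 0 < θ * F t ∧ θ * F t ≤ t * f t)
    (hdec : AntitoneOn (fun t => (f t * t - (2 - μ) * F t) / |t| ^ (3 - μ)) (Set.Iio 0))
    (hinc : MonotoneOn (fun t => (f t * t - (2 - μ) * F t) / |t| ^ (3 - μ)) (Set.Ioi 0)) :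
    ∀ t : ℝ, t ≠ 0 → StrictMonoOn (fun β => F (β * t) / β ^ (3 - μ)) (Set.Ioi (0:ℝ)) :=
  stmt2_general f F hf hF μ θ hμ1 hθ hAR
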